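/- arXiv:1904.08619 — 3 statements merged into one kernel-verified Lean document; each statement's English description precedes it below -/
import Mathlib

section
/- Under assumptions (H) on the perturbed dynamical system, let a > 0 satisfy 1/a ≤ p − 1 and set ψ₁(x) = exp(a|x|). Then C' := C · E[exp((1+a)|ξ|)] is finite and, for all x ∈ E, P_1 ψ₁(x) ≤ C' ψ₁(x) exp(−a(|x| − p|F(x)|)). -/
/-!
The growth bound `G y ≤ C e^{|y|}` and `|F x + z| ≤ |F x| + |z|` give
`G(F x + z) e^{a|F x + z|} ≤ C e^{(1+a)|F x|} e^{(1+a)|z|}`, and `1 + a ≤ a p` (which is `1/a ≤ p - 1`)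
turns `e^{(1+a)|F x|}` into `e^{a|x|} e^{-a(|x| - p|F x|)}`. Integrating in `z` leaves the exponential
moment `E[e^{(1+a)|ξ|}]`, which is finite because the Gaussian density decays like `e^{-λ|z|²}`,
`λ > 0` being a lower bound for the inverse covariance form on the unit sphere.
-/

open MeasureTheory Set

noncomputable section

variable {d : ℕ}

/-- The law of a (possibly non-centered) nondegenerate Gaussian random vector on `ℝ^d`:
it has a density with mean `m` and positive-definite covariance matrix `Cov` with
respect to the Lebesgue measure. -/
def IsNondegGaussian (γ : Measure (EuclideanSpace ℝ (Fin d))) : Prop :=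
  ∃ (m : EuclideanSpace ℝ (Fin d)) (Cov : Matrix (Fin d) (Fin d) ℝ), Cov.PosDef ∧
    γ = volume.withDensity (fun z => ENNReal.ofReal
      ((Real.sqrt ((2 * Real.pi) ^ d * Cov.det))⁻¹ *
        Real.exp (-(∑ i, ∑ j, (z i - m i) * Cov⁻¹ i j * (z j - m j)) / 2)))

/-- One step of the Feynman–Kac semigroup associated with the perturbed dynamical
system `X_{n+1} = F(X_n) + ξ_n` (noise law `γ`), penalization `G` and domain `Edom`:
`P_1 f(x) = ∫ G(F(x)+z) 1_{Edom}(F(x)+z) f(F(x)+z) γ(dz)`. -/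
def FKstep (Edom : Set (EuclideanSpace ℝ (Fin d)))
    (F : EuclideanSpace ℝ (Fin d) → EuclideanSpace ℝ (Fin d))
    (G : EuclideanSpace ℝ (Fin d) → ℝ) (γ : Measure (EuclideanSpace ℝ (Fin d)))
    (f : EuclideanSpace ℝ (Fin d) → ℝ) (x : EuclideanSpace ℝ (Fin d)) : ℝ :=
  ∫ z, Edom.indicator (fun y => G y * f y) (F x + z) ∂γ

/-- The Feynman–Kac semigroup: `P_0 = Id`, `P_n = (P_1)^n`. -/
def FK (Edom : Set (EuclideanSpace ℝ (Fin d)))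
    (F : EuclideanSpace ℝ (Fin d) → EuclideanSpace ℝ (Fin d))
    (G : EuclideanSpace ℝ (Fin d) → ℝ) (γ : Measure (EuclideanSpace ℝ (Fin d))) :
    ℕ → (EuclideanSpace ℝ (Fin d) → ℝ) → EuclideanSpace ℝ (Fin d) → ℝ :=
  fun n => (FKstep Edom F G γ)^[n]

lemma integrable_exp_neg_mul_sq_norm {V : Type*} [NormedAddCommGroup V] [InnerProductSpace ℝ V]
    [FiniteDimensional ℝ V] [MeasurableSpace V] [BorelSpace V] {b : ℝ} (hb : 0 < b) :
    Integrable (fun v : V => Real.exp (-b * ‖v‖ ^ 2)) := by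
  refine (GaussianFourier.integrable_cexp_neg_mul_sq_norm_add (V := V) (b := (b : ℂ))
    (by simpa using hb) 0 0).norm.congr (Filter.Eventually.of_forall fun v => ?_)
  simp [Complex.norm_exp, ← Complex.ofReal_pow]

lemma exists_pos_mul_sq_norm_le_of_homogeneous {E : Type*} [NormedAddCommGroup E]
    [NormedSpace ℝ E] [FiniteDimensional ℝ E] {q : E → ℝ} (hq : Continuous q)
    (hsmul : ∀ (c : ℝ) (v : E), q (c • v) = c ^ 2 * q v) (hpos : ∀ v, v ≠ 0 → 0 < q v) :
    ∃ lam : ℝ, 0 < lam ∧ ∀ v, lam * ‖v‖ ^ 2 ≤ q v := by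
  have hq0 : q 0 = 0 := by simpa using hsmul 0 0
  rcases subsingleton_or_nontrivial E with hE | hE
  · exact ⟨1, one_pos, fun v => by simp [Subsingleton.elim v 0, hq0]⟩
  obtain ⟨u₀, hu₀, hmin⟩ := (isCompact_sphere (0 : E) 1).exists_isMinOn
    (NormedSpace.sphere_nonempty.2 zero_le_one) hq.continuousOn
  refine ⟨q u₀, hpos u₀ (ne_zero_of_mem_unit_sphere ⟨u₀, hu₀⟩), fun v => ?_⟩
  rcases eq_or_ne v 0 with rfl | hv
  · simp [hq0]
  have hv' : ‖v‖ ≠ 0 := norm_ne_zero_iff.2 hv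
  have hunit : ‖v‖⁻¹ • v ∈ Metric.sphere (0 : E) 1 := by
    simp [norm_smul, hv']
  calc q u₀ * ‖v‖ ^ 2 ≤ q (‖v‖⁻¹ • v) * ‖v‖ ^ 2 := by gcongr; exact hmin hunit
    _ = q v := by rw [hsmul, inv_pow]; field_simp

lemma Matrix.PosDef.exists_pos_mul_sq_norm_le {ι : Type*} [Fintype ι] {A : Matrix ι ι ℝ}
    (hA : A.PosDef) :
    ∃ lam : ℝ, 0 < lam ∧ ∀ v : EuclideanSpace ℝ ι, lam * ‖v‖ ^ 2 ≤ ∑ i, ∑ j, v i * A i j * v j := by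
  refine exists_pos_mul_sq_norm_le_of_homogeneous (by fun_prop) (fun c v => ?_) (fun v hv => ?_)
  · simp only [PiLp.smul_apply, smul_eq_mul, Finset.mul_sum]
    exact Finset.sum_congr rfl fun i _ => Finset.sum_congr rfl fun j _ => by ring
  · have hvA : ∑ i, ∑ j, v i * A i j * v j = dotProduct v.ofLp (A.mulVec v.ofLp) := by
      simp only [dotProduct, Matrix.mulVec, Finset.mul_sum, mul_assoc]
    rw [hvA]
    simpa using hA.dotProduct_mulVec_pos (x := v.ofLp) (by simpa using hv)

lemma mul_sub_mul_sq_sub_le (c s t : ℝ) {lam : ℝ} (hlam : 0 < lam) :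
    c * t - lam * (t - s) ^ 2 / 2 ≤ (lam * s + c) ^ 2 / lam - lam / 4 * t ^ 2 := by
  have hamgm : (lam * s + c) * t ≤ lam / 4 * t ^ 2 + (lam * s + c) ^ 2 / lam := by
    have hsq : lam / 4 * t ^ 2 + (lam * s + c) ^ 2 / lam - (lam * s + c) * t =
        (lam * t / 2 - (lam * s + c)) ^ 2 / lam := by
      field_simp
      ring
    linarith [div_nonneg (sq_nonneg (lam * t / 2 - (lam * s + c))) hlam.le]
  linarith [mul_nonneg hlam.le (sq_nonneg s)]

theorem IsNondegGaussian.integrable_exp_mul_norm {γ : Measure (EuclideanSpace ℝ (Fin d))}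
    (hγ : IsNondegGaussian γ) (c : ℝ) : Integrable (fun z => Real.exp (c * ‖z‖)) γ := by
  obtain ⟨m, Cov, hCov, rfl⟩ := hγ
  obtain ⟨lam, hlam, hquad⟩ := hCov.inv.exists_pos_mul_sq_norm_le
  set K : ℝ := (Real.sqrt ((2 * Real.pi) ^ d * Cov.det))⁻¹
  set Q : EuclideanSpace ℝ (Fin d) → ℝ := fun z => ∑ i, ∑ j, (z i - m i) * Cov⁻¹ i j * (z j - m j)
  have hQ : ∀ z, lam * (‖z‖ - ‖m‖) ^ 2 ≤ Q z := fun z => calc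
    lam * (‖z‖ - ‖m‖) ^ 2 ≤ lam * ‖z - m‖ ^ 2 := mul_le_mul_of_nonneg_left
      (sq_le_sq.2 ((abs_norm_sub_norm_le z m).trans (le_abs_self _))) hlam.le
    _ ≤ Q z := by simpa using hquad (z - m)
  rw [integrable_withDensity_iff_integrable_smul' (by fun_prop)
    (Filter.Eventually.of_forall fun z => ENNReal.ofReal_lt_top)]
  refine Integrable.mono' ((integrable_exp_neg_mul_sq_norm (b := lam / 4) (by positivity)).const_mul
    (K * Real.exp ((lam * ‖m‖ + c) ^ 2 / lam))) (by fun_prop)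
    (Filter.Eventually.of_forall fun z => ?_)
  rw [ENNReal.toReal_ofReal (by positivity), smul_eq_mul, Real.norm_of_nonneg (by positivity),
    mul_assoc, mul_assoc, ← Real.exp_add, ← Real.exp_add]
  refine mul_le_mul_of_nonneg_left (Real.exp_le_exp.2 ?_) (by positivity)
  have hQz := hQ z
  dsimp only [Q] at hQz
  linarith [mul_sub_mul_sq_sub_le c ‖m‖ ‖z‖ hlam]

lemma FKstep_exp_mul_norm_le {Edom : Set (EuclideanSpace ℝ (Fin d))}
    {F : EuclideanSpace ℝ (Fin d) → EuclideanSpace ℝ (Fin d)} {G : EuclideanSpace ℝ (Fin d) → ℝ}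
    {γ : Measure (EuclideanSpace ℝ (Fin d))} {C a : ℝ} (hGnonneg : ∀ y ∈ Edom, 0 ≤ G y)
    (hGgrowth : ∀ y ∈ Edom, G y ≤ C * Real.exp ‖y‖) (hC : 0 ≤ C) (ha : 0 ≤ 1 + a)
    (hint : Integrable (fun z => Real.exp ((1 + a) * ‖z‖)) γ) (x : EuclideanSpace ℝ (Fin d)) :
    FKstep Edom F G γ (fun y => Real.exp (a * ‖y‖)) x ≤
      C * Real.exp ((1 + a) * ‖F x‖) * ∫ z, Real.exp ((1 + a) * ‖z‖) ∂γ := by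
  rw [FKstep, ← integral_const_mul]
  refine integral_mono_of_nonneg (ae_of_all _ fun z => indicator_nonneg
    (fun y hy => mul_nonneg (hGnonneg y hy) (Real.exp_pos _).le) _) (hint.const_mul _)
    (ae_of_all _ fun z => ?_)
  dsimp only
  by_cases hy : F x + z ∈ Edom
  · rw [indicator_of_mem hy]
    calc G (F x + z) * Real.exp (a * ‖F x + z‖)
        ≤ C * Real.exp ‖F x + z‖ * Real.exp (a * ‖F x + z‖) := by gcongr; exact hGgrowth _ hy
      _ = C * Real.exp ((1 + a) * ‖F x + z‖) := by rw [mul_assoc, ← Real.exp_add]; ring_nf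
      _ ≤ C * Real.exp ((1 + a) * (‖F x‖ + ‖z‖)) := by gcongr; exact norm_add_le _ _
      _ = C * Real.exp ((1 + a) * ‖F x‖) * Real.exp ((1 + a) * ‖z‖) := by
        rw [mul_assoc, ← Real.exp_add, mul_add]
  · rw [indicator_of_notMem hy]
    positivity

theorem FK_drift_estimate_general
    (Edom : Set (EuclideanSpace ℝ (Fin d)))
    (F : EuclideanSpace ℝ (Fin d) → EuclideanSpace ℝ (Fin d))
    (G : EuclideanSpace ℝ (Fin d) → ℝ)
    (hGpos : ∀ x ∈ Edom, 0 < G x)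
    (C : ℝ) (hGgrowth : ∀ x ∈ Edom, G x ≤ C * Real.exp ‖x‖)
    (p : ℝ)
    (γ : Measure (EuclideanSpace ℝ (Fin d))) (hγ : IsNondegGaussian γ)
    (a : ℝ) (ha : 0 < a) (hap : 1 / a ≤ p - 1) :
    Integrable (fun z => Real.exp ((1 + a) * ‖z‖)) γ ∧
      ∀ x ∈ Edom,
        FK Edom F G γ 1 (fun y => Real.exp (a * ‖y‖)) x ≤
          (C * ∫ z, Real.exp ((1 + a) * ‖z‖) ∂γ) * Real.exp (a * ‖x‖) *
            Real.exp (-(a * (‖x‖ - p * ‖F x‖))) := by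
  have hint := hγ.integrable_exp_mul_norm (1 + a)
  refine ⟨hint, fun x hx => ?_⟩
  have hC : 0 ≤ C := nonneg_of_mul_nonneg_left
    ((hGpos x hx).le.trans (hGgrowth x hx)) (Real.exp_pos _)
  have hap' : 1 + a ≤ a * p := by
    rw [div_le_iff₀ ha] at hap
    linarith
  calc FK Edom F G γ 1 (fun y => Real.exp (a * ‖y‖)) x
      ≤ C * Real.exp ((1 + a) * ‖F x‖) * ∫ z, Real.exp ((1 + a) * ‖z‖) ∂γ :=
        FKstep_exp_mul_norm_le (fun y hy => (hGpos y hy).le) hGgrowth hC (by linarith) hint x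
    _ ≤ C * Real.exp (a * p * ‖F x‖) * ∫ z, Real.exp ((1 + a) * ‖z‖) ∂γ := by gcongr
    _ = (C * ∫ z, Real.exp ((1 + a) * ‖z‖) ∂γ) * Real.exp (a * ‖x‖) *
          Real.exp (-(a * (‖x‖ - p * ‖F x‖))) := by
        rw [mul_assoc _ (Real.exp (a * ‖x‖)), ← Real.exp_add]
        ring_nf

/-- Drift estimate: under assumptions (H), with `ψ₁(x) = exp(a|x|)` and `1/a ≤ p - 1`,
`C' := C·E[exp((1+a)|ξ|)]` is finite and `P_1 ψ₁(x) ≤ C' ψ₁(x) exp(-a(|x| - p|F(x)|))`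
for all `x ∈ E`. -/
theorem FK_drift_estimate
    (Edom : Set (EuclideanSpace ℝ (Fin d)))
    (hEm : MeasurableSet Edom) (hEpos : 0 < volume Edom)
    (F : EuclideanSpace ℝ (Fin d) → EuclideanSpace ℝ (Fin d))
    (hFm : Measurable F)
    (hFloc : ∀ R : ℝ, ∃ M : ℝ, ∀ x, ‖x‖ ≤ R → ‖F x‖ ≤ M)
    (G : EuclideanSpace ℝ (Fin d) → ℝ)
    (hGm : Measurable G) (hGpos : ∀ x ∈ Edom, 0 < G x)
    (hGinvloc : ∀ R : ℝ, ∃ M : ℝ, ∀ x ∈ Edom, ‖x‖ ≤ R → 1 / G x ≤ M)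
    (C : ℝ) (hC : 0 < C) (hGgrowth : ∀ x ∈ Edom, G x ≤ C * Real.exp ‖x‖)
    (p : ℝ) (hp : 1 < p)
    (hdrift : ∀ M : ℝ, ∃ R : ℝ, ∀ x, R ≤ ‖x‖ → M ≤ ‖x‖ - p * ‖F x‖)
    (γ : Measure (EuclideanSpace ℝ (Fin d))) (hγ : IsNondegGaussian γ)
    (a : ℝ) (ha : 0 < a) (hap : 1 / a ≤ p - 1) :
    Integrable (fun z => Real.exp ((1 + a) * ‖z‖)) γ ∧
      ∀ x ∈ Edom,
        FK Edom F G γ 1 (fun y => Real.exp (a * ‖y‖)) x ≤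
          (C * ∫ z, Real.exp ((1 + a) * ‖z‖) ∂γ) * Real.exp (a * ‖x‖) *
            Real.exp (-(a * (‖x‖ - p * ‖F x‖))) :=
  FK_drift_estimate_general Edom F G hGpos C hGgrowth p γ hγ a ha hap
end
end

section
/- Under assumptions (H) on the perturbed dynamical system, fix a > 0, set ψ₁(x) = exp(a|x|), let R ≥ 1 and K := B(0,R) ∩ E (intersection of the ball of radius R with E). Then there exists a constant c > 0 such that for every measurable A ⊆ K, every x ∈ E and every y ∈ K: P_1(ψ₁ 1_A)(x)/ψ₁(x) ≤ c · P_1(ψ₁ 1_A)(y)/ψ₁(y). -/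
open MeasureTheory Set

noncomputable section

variable {d : ℕ}

/-! Against Lebesgue measure, `P_1(ψ₁ 1_A)(x) = ∫_A G ψ₁ ρ(· - F x)` with `ρ` the Gaussian density.
For `w ∈ A` and `y ∈ K` the point `w - F y` stays in the compact ball `B(0, R + sup_K |F|)`, where
the positive continuous `ρ` is bounded below, while `ρ` is bounded above everywhere; hence
`ρ(w - F x) ≤ κ ρ(w - F y)` uniformly. Dividing by `ψ₁(x) ≥ 1` and `ψ₁(y) ≤ e^{aR}` finishes. -/

theorem integral_add_left_withDensity_ofReal {V : Type*} [AddCommGroup V] [MeasurableSpace V]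
    [MeasurableAdd V] {μ : Measure V} [μ.IsAddLeftInvariant] {ρ : V → ℝ} (hρ : Measurable ρ)
    (hρ0 : ∀ z, 0 ≤ ρ z) (g : V → ℝ) (x : V) :
    ∫ z, g (x + z) ∂μ.withDensity (fun z => ENNReal.ofReal (ρ z)) = ∫ w, ρ (w - x) * g w ∂μ := by
  rw [integral_withDensity_eq_integral_toReal_smul hρ.ennreal_ofReal
    (.of_forall fun _ => ENNReal.ofReal_lt_top),
    ← integral_add_left_eq_self (fun w => ρ (w - x) * g w) x]
  simp [ENNReal.toReal_ofReal (hρ0 _)]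

theorem setIntegral_mul_le_const_mul {α : Type*} [MeasurableSpace α] {μ : Measure α}
    {A : Set α} (hA : MeasurableSet A) {g k₁ k₂ : α → ℝ} {c : ℝ}
    (hg : ∀ w ∈ A, 0 ≤ g w) (hk₁ : ∀ w ∈ A, 0 ≤ k₁ w) (hk : ∀ w ∈ A, k₁ w ≤ c * k₂ w)
    (hint : IntegrableOn (fun w => g w * k₂ w) A μ) :
    ∫ w in A, g w * k₁ w ∂μ ≤ c * ∫ w in A, g w * k₂ w ∂μ := by
  rw [← integral_const_mul]
  refine integral_mono_of_nonneg ?_ (hint.const_mul c) ?_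
  · filter_upwards [ae_restrict_mem hA] with w hw using mul_nonneg (hg w hw) (hk₁ w hw)
  · filter_upwards [ae_restrict_mem hA] with w hw
    calc g w * k₁ w ≤ g w * (c * k₂ w) := mul_le_mul_of_nonneg_left (hk w hw) (hg w hw)
      _ = c * (g w * k₂ w) := by ring

namespace IsNondegGaussian

theorem exists_density {γ : Measure (EuclideanSpace ℝ (Fin d))} (hγ : IsNondegGaussian γ) :
    ∃ ρ : EuclideanSpace ℝ (Fin d) → ℝ, Continuous ρ ∧ (∀ z, 0 < ρ z) ∧ (∃ B, ∀ z, ρ z ≤ B) ∧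
      γ = volume.withDensity fun z => ENNReal.ofReal (ρ z) := by
  obtain ⟨m, Cov, hCov, rfl⟩ := hγ
  set c₀ := (Real.sqrt ((2 * Real.pi) ^ d * Cov.det))⁻¹
  set Q : EuclideanSpace ℝ (Fin d) → ℝ := fun z => ∑ i, ∑ j, (z i - m i) * Cov⁻¹ i j * (z j - m j)
  have hc₀ : 0 < c₀ := inv_pos.2 (Real.sqrt_pos.2 (mul_pos (by positivity) hCov.det_pos))
  have hQ : ∀ z, 0 ≤ Q z := fun z => by
    simpa [Q, dotProduct, Matrix.mulVec, Finset.mul_sum, mul_assoc] using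
      hCov.inv.posSemidef.dotProduct_mulVec_nonneg (fun i => z i - m i)
  have hQc : Continuous Q := by fun_prop
  refine ⟨fun z => c₀ * Real.exp (-Q z / 2), by fun_prop, fun z => by positivity,
    ⟨c₀, fun z => ?_⟩, rfl⟩
  exact mul_le_of_le_one_right hc₀.le (Real.exp_le_one_iff.2 (by linarith [hQ z]))

end IsNondegGaussian

theorem FKstep_indicator_eq_setIntegral {Edom A : Set (EuclideanSpace ℝ (Fin d))}
    (hA : MeasurableSet A) (hAE : A ⊆ Edom)
    (F : EuclideanSpace ℝ (Fin d) → EuclideanSpace ℝ (Fin d)) (G : EuclideanSpace ℝ (Fin d) → ℝ)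
    {ρ : EuclideanSpace ℝ (Fin d) → ℝ} (hρ : Measurable ρ) (hρ0 : ∀ z, 0 ≤ ρ z)
    (f : EuclideanSpace ℝ (Fin d) → ℝ) (x : EuclideanSpace ℝ (Fin d)) :
    FKstep Edom F G (volume.withDensity fun z => ENNReal.ofReal (ρ z)) (A.indicator f) x =
      ∫ w in A, G w * f w * ρ (w - F x) := by
  have hind :
      Edom.indicator (fun y => G y * A.indicator f y) = A.indicator (fun y => G y * f y) := by
    ext w
    by_cases hw : w ∈ A
    · simp [hw, hAE hw]
    · simp [hw]
  rw [FKstep, hind, integral_add_left_withDensity_ofReal hρ hρ0, ← integral_indicator hA]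
  congr 1 with w
  by_cases hw : w ∈ A <;> simp [hw, mul_comm]

theorem IsCompact.exists_pos_forall_le_mul {X : Type*} [TopologicalSpace X] {K : Set X}
    (hK : IsCompact K) {ρ : X → ℝ} (hρc : Continuous ρ) (hρpos : ∀ z, 0 < ρ z) {B : ℝ}
    (hB : ∀ z, ρ z ≤ B) : ∃ κ > 0, ∀ u, ∀ v ∈ K, ρ u ≤ κ * ρ v := by
  obtain ⟨ε, hε, hερ⟩ := hK.exists_forall_le' hρc.continuousOn fun v _ => hρpos v
  have hκ : 0 < max B 1 / ε := by positivity
  refine ⟨max B 1 / ε, hκ, fun u v hv => ?_⟩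
  calc ρ u ≤ max B 1 / ε * ε := by
        rw [div_mul_cancel₀ _ hε.ne']; exact (hB u).trans (le_max_left _ _)
    _ ≤ max B 1 / ε * ρ v := by gcongr; exact hερ v hv

theorem integrableOn_mul_exp_norm_mul {A : Set (EuclideanSpace ℝ (Fin d))} {R : ℝ}
    (hA : MeasurableSet A) (hAR : A ⊆ Metric.closedBall 0 R)
    {G : EuclideanSpace ℝ (Fin d) → ℝ} (hGm : Measurable G) (hG0 : ∀ w ∈ A, 0 ≤ G w)
    {C : ℝ} (hC : 0 ≤ C) (hG : ∀ w ∈ A, G w ≤ C * Real.exp ‖w‖) {a : ℝ} (ha : 0 ≤ a)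
    {k : EuclideanSpace ℝ (Fin d) → ℝ} (hk : Measurable k) (hk0 : ∀ z, 0 ≤ k z) {B : ℝ}
    (hkB : ∀ z, k z ≤ B) :
    IntegrableOn (fun w => G w * Real.exp (a * ‖w‖) * k w) A := by
  refine Measure.integrableOn_of_bounded (M := C * Real.exp R * Real.exp (a * R) * B)
    ((measure_mono hAR).trans_lt measure_closedBall_lt_top).ne (by fun_prop) ?_
  filter_upwards [ae_restrict_mem hA] with w hw
  have hwR : ‖w‖ ≤ R := mem_closedBall_zero_iff.1 (hAR hw)
  have hGw : G w ≤ C * Real.exp R := (hG w hw).trans (by gcongr)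
  have := hG0 w hw
  rw [Real.norm_of_nonneg (by have := hk0 w; positivity)]
  gcongr
  exacts [hk0 w, hkB w]

theorem FK_one_step_comparison_general
    (Edom : Set (EuclideanSpace ℝ (Fin d)))
    (F : EuclideanSpace ℝ (Fin d) → EuclideanSpace ℝ (Fin d))
    (hFloc : ∀ R : ℝ, ∃ M : ℝ, ∀ x, ‖x‖ ≤ R → ‖F x‖ ≤ M)
    (G : EuclideanSpace ℝ (Fin d) → ℝ)
    (hGm : Measurable G) (hGpos : ∀ x ∈ Edom, 0 < G x)
    (C : ℝ) (hC : 0 < C) (hGgrowth : ∀ x ∈ Edom, G x ≤ C * Real.exp ‖x‖)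
    (γ : Measure (EuclideanSpace ℝ (Fin d))) (hγ : IsNondegGaussian γ)
    (a : ℝ) (ha : 0 < a) (R : ℝ) :
    ∃ c : ℝ, 0 < c ∧
      ∀ A ⊆ Metric.closedBall (0 : EuclideanSpace ℝ (Fin d)) R ∩ Edom,
        MeasurableSet A →
        ∀ x ∈ Edom, ∀ y ∈ Metric.closedBall (0 : EuclideanSpace ℝ (Fin d)) R ∩ Edom,
          FK Edom F G γ 1 (A.indicator fun w => Real.exp (a * ‖w‖)) x /
              Real.exp (a * ‖x‖) ≤
            c * (FK Edom F G γ 1 (A.indicator fun w => Real.exp (a * ‖w‖)) y /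
              Real.exp (a * ‖y‖)) := by
  obtain ⟨ρ, hρc, hρpos, ⟨B, hB⟩, rfl⟩ := hγ.exists_density
  have hρm : Measurable ρ := hρc.measurable
  have hρ0 : ∀ z, 0 ≤ ρ z := fun z => (hρpos z).le
  obtain ⟨M, hM⟩ := hFloc R
  obtain ⟨κ, hκ, hρκ⟩ :=
    (isCompact_closedBall (0 : EuclideanSpace ℝ (Fin d)) (R + M)).exists_pos_forall_le_mul
      hρc hρpos hB
  refine ⟨κ * Real.exp (a * R), by positivity, fun A hAK hA x _ y hy => ?_⟩
  have hAR : A ⊆ Metric.closedBall 0 R := fun w hw => (hAK hw).1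
  have hAE : A ⊆ Edom := fun w hw => (hAK hw).2
  have hyR : ‖y‖ ≤ R := mem_closedBall_zero_iff.1 hy.1
  have hG0 : ∀ w ∈ A, 0 ≤ G w := fun w hw => (hGpos w (hAE hw)).le
  have hg0 : ∀ w ∈ A, 0 ≤ G w * Real.exp (a * ‖w‖) := fun w hw => by have := hG0 w hw; positivity
  have hcomp : ∀ w ∈ A, ρ (w - F x) ≤ κ * ρ (w - F y) := fun w hw =>
    hρκ _ _ <| mem_closedBall_zero_iff.2 <| (norm_sub_le _ _).trans <|
      add_le_add (mem_closedBall_zero_iff.1 (hAR hw)) (hM y hyR)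
  have hint := integrableOn_mul_exp_norm_mul hA hAR hGm hG0 hC.le
    (fun w hw => hGgrowth w (hAE hw)) ha.le (hρm.comp (measurable_id.sub_const (F y)))
    (fun _ => hρ0 _) (fun _ => hB _)
  simp only [FK, Function.iterate_one]
  rw [FKstep_indicator_eq_setIntegral hA hAE F G hρm hρ0,
    FKstep_indicator_eq_setIntegral hA hAE F G hρm hρ0]
  set Px := ∫ w in A, G w * Real.exp (a * ‖w‖) * ρ (w - F x)
  set Py := ∫ w in A, G w * Real.exp (a * ‖w‖) * ρ (w - F y)
  have hPx : 0 ≤ Px := setIntegral_nonneg hA fun w hw => mul_nonneg (hg0 w hw) (hρ0 _)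
  have hPy : 0 ≤ Py := setIntegral_nonneg hA fun w hw => mul_nonneg (hg0 w hw) (hρ0 _)
  calc Px / Real.exp (a * ‖x‖) ≤ Px := div_le_self hPx (Real.one_le_exp (by positivity))
    _ ≤ κ * Py := setIntegral_mul_le_const_mul hA hg0 (fun _ _ => hρ0 _) hcomp hint
    _ ≤ κ * (Real.exp (a * R) * (Py / Real.exp (a * ‖y‖))) := by
      gcongr κ * ?_
      rw [mul_div_assoc', le_div_iff₀ (Real.exp_pos _), mul_comm]
      gcongr
    _ = κ * Real.exp (a * R) * (Py / Real.exp (a * ‖y‖)) := by ring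

/-- Uniform comparison of one-step masses (key step towards (G1) and (G3)): under
assumptions (H), with `ψ₁(x) = exp(a|x|)`, `R ≥ 1` and `K := B(0,R) ∩ E`, there is a
constant `c > 0` such that for all measurable `A ⊆ K`, all `x ∈ E` and all `y ∈ K`,
`P_1(ψ₁ 1_A)(x)/ψ₁(x) ≤ c P_1(ψ₁ 1_A)(y)/ψ₁(y)`. -/
theorem FK_one_step_comparison
    (Edom : Set (EuclideanSpace ℝ (Fin d)))
    (hEm : MeasurableSet Edom) (hEpos : 0 < volume Edom)
    (F : EuclideanSpace ℝ (Fin d) → EuclideanSpace ℝ (Fin d))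
    (hFm : Measurable F)
    (hFloc : ∀ R : ℝ, ∃ M : ℝ, ∀ x, ‖x‖ ≤ R → ‖F x‖ ≤ M)
    (G : EuclideanSpace ℝ (Fin d) → ℝ)
    (hGm : Measurable G) (hGpos : ∀ x ∈ Edom, 0 < G x)
    (hGinvloc : ∀ R : ℝ, ∃ M : ℝ, ∀ x ∈ Edom, ‖x‖ ≤ R → 1 / G x ≤ M)
    (C : ℝ) (hC : 0 < C) (hGgrowth : ∀ x ∈ Edom, G x ≤ C * Real.exp ‖x‖)
    (p : ℝ) (hp : 1 < p)
    (hdrift : ∀ M : ℝ, ∃ R : ℝ, ∀ x, R ≤ ‖x‖ → M ≤ ‖x‖ - p * ‖F x‖)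
    (γ : Measure (EuclideanSpace ℝ (Fin d))) (hγ : IsNondegGaussian γ)
    (a : ℝ) (ha : 0 < a) (R : ℝ) (hR : 1 ≤ R) :
    ∃ c : ℝ, 0 < c ∧
      ∀ A ⊆ Metric.closedBall (0 : EuclideanSpace ℝ (Fin d)) R ∩ Edom,
        MeasurableSet A →
        ∀ x ∈ Edom, ∀ y ∈ Metric.closedBall (0 : EuclideanSpace ℝ (Fin d)) R ∩ Edom,
          FK Edom F G γ 1 (A.indicator fun w => Real.exp (a * ‖w‖)) x /
              Real.exp (a * ‖x‖) ≤
            c * (FK Edom F G γ 1 (A.indicator fun w => Real.exp (a * ‖w‖)) y /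
              Real.exp (a * ‖y‖)) :=
  FK_one_step_comparison_general Edom F hFloc G hGm hGpos C hC hGgrowth γ hγ a ha R
end
end

section
/- Let E be a measurable space, ψ₁ : E → (0,∞) measurable, and (P_n)_{n∈ℕ} a positive semigroup on L^∞(ψ₁). Let K ⊆ E be measurable and θ₁, c₂ > 0 be such that P_1 ψ₁ ≤ θ₁ ψ₁ + c₂ 1_K ψ₁ on E. Define the restricted operator P̃_1 f := P_1(1_{E∖K} f) and P̃_n := (P̃_1)^n. Then for all n ≥ 1 and all x ∈ E: P̃_n ψ₁(x) ≤ (θ₁ + c₂) θ₁^{n−1} ψ₁(x). -/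
open MeasureTheory Filter Set

noncomputable section

variable {E : Type*} [MeasurableSpace E]

/-- Membership in `L^∞(ψ)`: measurable functions `f` with `sup_E |f|/ψ < ∞`. -/
def MemLinf (ψ : E → ℝ) (f : E → ℝ) : Prop :=
  Measurable f ∧ ∃ M : ℝ, ∀ x, |f x| ≤ M * ψ x

/-- A positive semigroup `(P_n)_{n∈ℕ}` of linear operators on `L^∞(ψ)`. -/
structure PosSemigroup (ψ : E → ℝ) where
  P : ℕ → (E → ℝ) → E → ℝ
  map_zero : ∀ f, P 0 f = f
  map_comp : ∀ n m f, MemLinf ψ f → P (n + m) f = P n (P m f)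
  map_add : ∀ n f g, MemLinf ψ f → MemLinf ψ g → P n (f + g) = P n f + P n g
  map_smul : ∀ n (c : ℝ) f, MemLinf ψ f → P n (fun x => c * f x) = fun x => c * P n f x
  pos : ∀ n f, MemLinf ψ f → (∀ x, 0 ≤ f x) → ∀ x, 0 ≤ P n f x
  mem : ∀ n f, MemLinf ψ f → MemLinf ψ (P n f)

/-- Condition (G) for a (discrete) family of operators `P`, with Lyapunov functions
`ψ₁` and `ψ₂`. -/
def CondG (P : ℕ → (E → ℝ) → E → ℝ) (ψ₁ ψ₂ : E → ℝ) : Prop :=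
  ∃ (θ₁ θ₂ c₁ c₂ c₃ : ℝ) (n₁ : ℕ) (K : Set E) (ν : Measure E),
    0 < θ₁ ∧ θ₁ < θ₂ ∧ 0 < c₁ ∧ 0 < c₂ ∧ 0 < c₃ ∧ 1 ≤ n₁ ∧
    MeasurableSet K ∧ IsProbabilityMeasure ν ∧ ν Kᶜ = 0 ∧
    -- (G1) local Dobrushin coefficient
    (∀ x ∈ K, ∀ A ⊆ K, MeasurableSet A →
      c₁ * (ν A).toReal * ψ₁ x ≤ P n₁ (A.indicator ψ₁) x) ∧
    -- (G2) global Lyapunov criterion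
    (∃ ε > (0:ℝ), ∀ x ∈ K, ε * ψ₁ x ≤ ψ₂ x) ∧
    (∀ x, ψ₂ x ≤ ψ₁ x) ∧
    (∀ x, P 1 ψ₁ x ≤ θ₁ * ψ₁ x + K.indicator (fun y => c₂ * ψ₁ y) x) ∧
    (∀ x, θ₂ * ψ₂ x ≤ P 1 ψ₂ x) ∧
    -- (G3) local Harnack inequality (cross-multiplied form of sup/inf ≤ c₃)
    (∀ n : ℕ, ∀ y ∈ K, ∀ z ∈ K, P n ψ₁ y * ψ₁ z ≤ c₃ * (P n ψ₁ z) * ψ₁ y) ∧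
    -- (G4) aperiodicity
    (∀ x ∈ K, ∃ n₄ : ℕ, ∀ n ≥ n₄, 0 < P n (K.indicator ψ₁) x)

/-- Bound on the semigroup restricted to paths outside `K`: if
`P_1 ψ₁ ≤ θ₁ ψ₁ + c₂ 1_K ψ₁` then the restricted semigroup
`P̃_n = (f ↦ P_1(1_{E∖K} f))^n` satisfies `P̃_n ψ₁ ≤ (θ₁+c₂) θ₁^{n-1} ψ₁`. -/
theorem restricted_semigroup_bound
    (ψ₁ : E → ℝ) (hψ₁m : Measurable ψ₁) (hψ₁pos : ∀ x, 0 < ψ₁ x)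
    (S : PosSemigroup ψ₁)
    (K : Set E) (hK : MeasurableSet K)
    (θ₁ c₂ : ℝ) (hθ₁ : 0 < θ₁) (hc₂ : 0 < c₂)
    (hLyap : ∀ x, S.P 1 ψ₁ x ≤ θ₁ * ψ₁ x + K.indicator (fun y => c₂ * ψ₁ y) x) :
    ∀ n : ℕ, 1 ≤ n → ∀ x : E,
      (fun f : E → ℝ => S.P 1 (Kᶜ.indicator f))^[n] ψ₁ x ≤
        (θ₁ + c₂) * θ₁ ^ (n - 1) * ψ₁ x := by
  set Q : (E → ℝ) → E → ℝ := fun f => S.P 1 (Kᶜ.indicator f) with hQ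
  have hmemψ : MemLinf ψ₁ ψ₁ :=
    ⟨hψ₁m, 1, fun x => by rw [abs_of_pos (hψ₁pos x), one_mul]⟩
  have hmemInd : ∀ f, MemLinf ψ₁ f → MemLinf ψ₁ (Kᶜ.indicator f) := by
    rintro f ⟨hf, M, hM⟩
    refine ⟨hf.indicator hK.compl, M, fun x => ?_⟩
    by_cases hx : x ∈ Kᶜ
    · rw [Set.indicator_of_mem hx]; exact hM x
    · rw [Set.indicator_of_notMem hx, abs_zero]
      exact (abs_nonneg (f x)).trans (hM x)
  have hmemSmul : ∀ (c : ℝ) f, MemLinf ψ₁ f → MemLinf ψ₁ (fun x => c * f x) := by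
    rintro c f ⟨hf, M, hM⟩
    refine ⟨(measurable_const.mul hf), |c| * M, fun x => ?_⟩
    rw [abs_mul, mul_assoc]
    exact mul_le_mul_of_nonneg_left (hM x) (abs_nonneg c)
  have hmono : ∀ f g, MemLinf ψ₁ f → MemLinf ψ₁ g → (∀ x, f x ≤ g x) →
      ∀ x, S.P 1 f x ≤ S.P 1 g x := by
    intro f g hf hg hfg x
    have hh : MemLinf ψ₁ (g - f) := by
      obtain ⟨hfm, Mf, hMf⟩ := hf
      obtain ⟨hgm, Mg, hMg⟩ := hg
      refine ⟨hgm.sub hfm, Mg + Mf, fun y => ?_⟩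
      have h1 : |g y - f y| ≤ |g y| + |f y| := abs_sub _ _
      have := hMf y; have := hMg y
      simp only [Pi.sub_apply]; nlinarith
    have h1 : S.P 1 (f + (g - f)) = S.P 1 f + S.P 1 (g - f) :=
      S.map_add 1 f (g - f) hf hh
    have h2 : f + (g - f) = g := by funext y; simp
    have h3 := S.pos 1 (g - f) hh (fun y => sub_nonneg.2 (hfg y)) x
    have h4 := congrFun h1 x
    rw [h2] at h4
    simp only [Pi.add_apply] at h4
    linarith
  have hmemQ : ∀ f, MemLinf ψ₁ f → MemLinf ψ₁ (Q f) := fun f hf =>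
    S.mem 1 _ (hmemInd f hf)
  have hmemQψ : MemLinf ψ₁ (Q ψ₁) := hmemQ ψ₁ hmemψ
  have hIndle : ∀ x, Kᶜ.indicator ψ₁ x ≤ ψ₁ x := fun x =>
    Set.indicator_le_self' (fun y _ => (hψ₁pos y).le) x
  have hQle : ∀ x, Q ψ₁ x ≤ S.P 1 ψ₁ x :=
    hmono _ _ (hmemInd ψ₁ hmemψ) hmemψ hIndle
  have hP1le : ∀ x, S.P 1 ψ₁ x ≤ (θ₁ + c₂) * ψ₁ x := by
    intro x
    refine (hLyap x).trans ?_
    have : K.indicator (fun y => c₂ * ψ₁ y) x ≤ c₂ * ψ₁ x :=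
      Set.indicator_le_self' (fun y _ => mul_nonneg hc₂.le (hψ₁pos y).le) x
    nlinarith [hψ₁pos x]
  -- key contraction: Q (Q ψ₁) ≤ θ₁ * Q ψ₁
  have hstep : ∀ x, Q (Q ψ₁) x ≤ θ₁ * Q ψ₁ x := by
    intro x
    have hpt : ∀ y, Kᶜ.indicator (Q ψ₁) y ≤ θ₁ * Kᶜ.indicator ψ₁ y := by
      intro y
      by_cases hy : y ∈ Kᶜ
      · rw [Set.indicator_of_mem hy, Set.indicator_of_mem hy]
        have h1 := (hQle y).trans (hLyap y)
        rw [Set.indicator_of_notMem hy] at h1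
        linarith
      · rw [Set.indicator_of_notMem hy, Set.indicator_of_notMem hy, mul_zero]
    have hm1 : MemLinf ψ₁ (Kᶜ.indicator (Q ψ₁)) := hmemInd _ hmemQψ
    have hm2 : MemLinf ψ₁ (fun y => θ₁ * Kᶜ.indicator ψ₁ y) :=
      hmemSmul θ₁ _ (hmemInd ψ₁ hmemψ)
    have h1 := hmono _ _ hm1 hm2 hpt x
    have h2 := S.map_smul 1 θ₁ (Kᶜ.indicator ψ₁) (hmemInd ψ₁ hmemψ)
    calc Q (Q ψ₁) x ≤ S.P 1 (fun y => θ₁ * Kᶜ.indicator ψ₁ y) x := h1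
      _ = θ₁ * Q ψ₁ x := by rw [h2]
  have key : ∀ n : ℕ, ∀ x, Q^[n + 1] ψ₁ x ≤ θ₁ ^ n * Q ψ₁ x := by
    intro n
    induction n with
    | zero => intro x; simp
    | succ m ih =>
      intro x
      have hmemIter : ∀ k : ℕ, MemLinf ψ₁ (Q^[k] ψ₁) := by
        intro k
        induction k with
        | zero => simpa using hmemψ
        | succ j ihj =>
          rw [Function.iterate_succ_apply']
          exact hmemQ _ ihj
      have hpt : ∀ y, Kᶜ.indicator (Q^[m + 1] ψ₁) y ≤
          θ₁ ^ m * Kᶜ.indicator (Q ψ₁) y := by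
        intro y
        by_cases hy : y ∈ Kᶜ
        · rw [Set.indicator_of_mem hy, Set.indicator_of_mem hy]
          exact ih y
        · rw [Set.indicator_of_notMem hy, Set.indicator_of_notMem hy, mul_zero]
      have hm1 : MemLinf ψ₁ (Kᶜ.indicator (Q^[m + 1] ψ₁)) :=
        hmemInd _ (hmemIter (m + 1))
      have hm2 : MemLinf ψ₁ (fun y => θ₁ ^ m * Kᶜ.indicator (Q ψ₁) y) :=
        hmemSmul _ _ (hmemInd _ hmemQψ)
      have h1 := hmono _ _ hm1 hm2 hpt x
      have h2 := S.map_smul 1 (θ₁ ^ m) (Kᶜ.indicator (Q ψ₁)) (hmemInd _ hmemQψ)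
      have h3 : Q^[m + 1 + 1] ψ₁ x = Q (Q^[m + 1] ψ₁) x := by
        rw [Function.iterate_succ_apply']
      have h4 : θ₁ ^ m * Q (Q ψ₁) x ≤ θ₁ ^ m * (θ₁ * Q ψ₁ x) :=
        mul_le_mul_of_nonneg_left (hstep x) (pow_nonneg hθ₁.le m)
      calc Q^[m + 1 + 1] ψ₁ x = Q (Q^[m + 1] ψ₁) x := h3
        _ ≤ S.P 1 (fun y => θ₁ ^ m * Kᶜ.indicator (Q ψ₁) y) x := h1
        _ = θ₁ ^ m * Q (Q ψ₁) x := by rw [h2]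
        _ ≤ θ₁ ^ m * (θ₁ * Q ψ₁ x) := h4
        _ = θ₁ ^ (m + 1) * Q ψ₁ x := by ring
  intro n hn x
  obtain ⟨m, rfl⟩ : ∃ m, n = m + 1 := ⟨n - 1, (Nat.succ_pred_eq_of_pos hn).symm⟩
  have h1 := key m x
  have h2 : Q ψ₁ x ≤ (θ₁ + c₂) * ψ₁ x := (hQle x).trans (hP1le x)
  have h3 : θ₁ ^ m * Q ψ₁ x ≤ θ₁ ^ m * ((θ₁ + c₂) * ψ₁ x) :=
    mul_le_mul_of_nonneg_left h2 (pow_nonneg hθ₁.le m)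
  have h4 : m + 1 - 1 = m := rfl
  rw [h4]
  calc Q^[m + 1] ψ₁ x ≤ θ₁ ^ m * Q ψ₁ x := h1
    _ ≤ θ₁ ^ m * ((θ₁ + c₂) * ψ₁ x) := h3
    _ = (θ₁ + c₂) * θ₁ ^ m * ψ₁ x := by ring
end
end
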